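/- Every element of SO(3) is conjugate within SO(3) to an element of the maximal torus of rotations about the z-axis: for every A ∈ M₃(ℝ) with Aᵀ * A = 1 and det A = 1, there exist P ∈ M₃(ℝ) with Pᵀ * P = 1 and det P = 1, and θ ∈ ℝ, such that A = P * !![cos θ, sin θ, 0; −sin θ, cos θ, 0; 0, 0, 1] * Pᵀ. -/

import Mathlib

/-!
In odd dimension `det (A - 1) = det (Aᵀ * (A - 1)) = det ((1 - A)ᵀ) = -det (A - 1)` for
`A ∈ SO(n)`, so `A` fixes a unit vector `u`. Extending `u` to an orthonormal basis, and flipping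
the sign of another basis vector if necessary, gives `P ∈ SO(3)` whose last column is `u`.
Then `Pᵀ A P ∈ SO(3)` fixes the last standard basis vector, so it is a rotation of the
orthogonal plane.
-/

open Matrix

theorem exists_cos_eq_sin_eq_of_sq_add_sq_eq_one {x y : ℝ} (h : x ^ 2 + y ^ 2 = 1) :
    ∃ θ : ℝ, Real.cos θ = x ∧ Real.sin θ = y := by
  obtain ⟨θ, hθ⟩ := (Complex.norm_eq_one_iff ⟨x, y⟩).1 <| by
    rw [Complex.norm_def, Complex.normSq_mk, ← sq, ← sq, h, Real.sqrt_one]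
  exact ⟨θ, by simpa using congrArg Complex.re hθ, by simpa using congrArg Complex.im hθ⟩

section

variable {ι R : Type*} [Fintype ι] [DecidableEq ι] [CommRing R] [IsDomain R]

theorem det_sub_one_eq_zero_of_mem_specialOrthogonalGroup [CharZero R]
    (hι : Odd (Fintype.card ι)) {A : Matrix ι ι R} (hA : A ∈ specialOrthogonalGroup ι R) :
    (A - 1).det = 0 := by
  obtain ⟨hAA, hdet⟩ := mem_specialOrthogonalGroup_iff.1 hA
  rw [mem_orthogonalGroup_iff'] at hAA
  have key : (A - 1).det = -(A - 1).det :=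
    calc (A - 1).det = (Aᵀ * (A - 1)).det := by rw [det_mul, det_transpose, hdet, one_mul]
      _ = (1 - A)ᵀ.det := by rw [mul_sub, hAA, mul_one, transpose_sub, transpose_one]
      _ = -(A - 1).det := by rw [det_transpose, ← neg_sub, det_neg, hι.neg_one_pow, neg_one_mul]
  rwa [CharZero.eq_neg_self_iff] at key

theorem exists_mulVec_eq_self_of_mem_specialOrthogonalGroup [CharZero R]
    (hι : Odd (Fintype.card ι)) {A : Matrix ι ι R} (hA : A ∈ specialOrthogonalGroup ι R) :
    ∃ v ≠ 0, A *ᵥ v = v := by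
  obtain ⟨v, hv, hAv⟩ := exists_mulVec_eq_zero_iff.2
    (det_sub_one_eq_zero_of_mem_specialOrthogonalGroup hι hA)
  exact ⟨v, hv, by rwa [sub_mulVec, one_mulVec, sub_eq_zero] at hAv⟩

theorem exists_norm_eq_one_mulVec_eq_self_of_mem_specialOrthogonalGroup
    (hι : Odd (Fintype.card ι)) {A : Matrix ι ι ℝ}
    (hA : A ∈ specialOrthogonalGroup ι ℝ) :
    ∃ u : EuclideanSpace ℝ ι, ‖u‖ = 1 ∧ A *ᵥ u = u := by
  obtain ⟨v, hv, hAv⟩ := exists_mulVec_eq_self_of_mem_specialOrthogonalGroup hι hA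
  have hv' : WithLp.toLp 2 v ≠ 0 := by simpa using hv
  refine ⟨‖WithLp.toLp 2 v‖⁻¹ • WithLp.toLp 2 v, norm_smul_inv_norm hv', ?_⟩
  simp [mulVec_smul, hAv]

theorem exists_mem_orthogonalGroup_mulVec_single_eq {u : EuclideanSpace ℝ ι} (hu : ‖u‖ = 1)
    (i : ι) : ∃ P ∈ orthogonalGroup ι ℝ, P *ᵥ Pi.single i 1 = u := by
  have hon : Orthonormal ℝ (({i} : Set ι).domRestrict fun _ => u) := by
    rw [orthonormal_iff_ite]
    rintro ⟨j, rfl⟩ ⟨k, rfl⟩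
    simp [Set.domRestrict_apply, hu]
  obtain ⟨b, hb⟩ := hon.exists_orthonormalBasis_extension_of_card_eq
    (finrank_euclideanSpace (ι := ι))
  refine ⟨(EuclideanSpace.basisFun ι ℝ).toBasis.toMatrix b,
    (EuclideanSpace.basisFun ι ℝ).toMatrix_orthonormalBasis_mem_orthogonal b, ?_⟩
  ext k
  simp [Module.Basis.toMatrix_apply, hb i rfl]

theorem exists_mem_specialOrthogonalGroup_mulVec_single_eq_of_mem_orthogonalGroup [Nontrivial ι]
    {Q : Matrix ι ι R} (hQ : Q ∈ orthogonalGroup ι R) (i : ι) :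
    ∃ P ∈ specialOrthogonalGroup ι R, P *ᵥ Pi.single i 1 = Q *ᵥ Pi.single i 1 := by
  have hQQ : Qᵀ * Q = 1 := (mem_orthogonalGroup_iff' ι R).1 hQ
  have hdet : Q.det * Q.det = 1 := by
    simpa [det_mul, det_transpose] using congrArg det hQQ
  rcases mul_self_eq_one_iff.1 hdet with h | h
  · exact ⟨Q, mem_specialOrthogonalGroup_iff.2 ⟨hQ, h⟩, rfl⟩
  obtain ⟨j, hji⟩ := exists_ne i
  set D : Matrix ι ι R := diagonal fun k => if k = j then -1 else 1
  have hDD : Dᵀ * D = 1 := by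
    rw [diagonal_transpose, diagonal_mul_diagonal, ← diagonal_one]
    congr 1; ext k; split_ifs <;> simp
  have hdetD : D.det = -1 := by simp [D, det_diagonal, Finset.prod_ite_eq']
  refine ⟨Q * D, mem_specialOrthogonalGroup_iff.2
    ⟨mul_mem hQ ((mem_orthogonalGroup_iff' ι R).2 hDD), ?_⟩, ?_⟩
  · rw [det_mul, h, hdetD, neg_one_mul, neg_neg]
  · rw [← mulVec_mulVec, diagonal_mulVec_single, if_neg hji.symm, one_mul]

theorem exists_mem_specialOrthogonalGroup_mulVec_single_eq [Nontrivial ι]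
    {u : EuclideanSpace ℝ ι} (hu : ‖u‖ = 1) (i : ι) :
    ∃ P ∈ specialOrthogonalGroup ι ℝ, P *ᵥ Pi.single i 1 = u := by
  obtain ⟨Q, hQ, hQu⟩ := exists_mem_orthogonalGroup_mulVec_single_eq hu i
  rw [← hQu]
  exact exists_mem_specialOrthogonalGroup_mulVec_single_eq_of_mem_orthogonalGroup hQ i

end

noncomputable def zRotation (θ : ℝ) : Matrix (Fin 3) (Fin 3) ℝ :=
  !![Real.cos θ, Real.sin θ, 0; -Real.sin θ, Real.cos θ, 0; 0, 0, 1]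

theorem exists_eq_zRotation_of_mulVec_single_two {B : Matrix (Fin 3) (Fin 3) ℝ}
    (hB : B ∈ specialOrthogonalGroup (Fin 3) ℝ) (hfix : B *ᵥ Pi.single 2 1 = Pi.single 2 1) :
    ∃ θ, B = zRotation θ := by
  obtain ⟨hBB, hdet⟩ := mem_specialOrthogonalGroup_iff.1 hB
  rw [mem_orthogonalGroup_iff'] at hBB
  have hcol : ∀ j, B j 2 = (Pi.single 2 1 : Fin 3 → ℝ) j := fun j => by
    simpa [mulVec_single_one] using congrFun hfix j
  have h02 : B 0 2 = 0 := by simpa using hcol 0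
  have h12 : B 1 2 = 0 := by simpa using hcol 1
  have h22 : B 2 2 = 1 := by simpa using hcol 2
  have gram : ∀ j k, B 0 j * B 0 k + B 1 j * B 1 k + B 2 j * B 2 k = if j = k then 1 else 0 :=
    fun j k => by simpa [mul_apply, Fin.sum_univ_three, one_apply] using congrFun (congrFun hBB j) k
  have h20 : B 2 0 = 0 := by simpa [h02, h12, h22] using gram 2 0
  have h21 : B 2 1 = 0 := by simpa [h02, h12, h22] using gram 2 1
  have hunit : B 0 0 ^ 2 + (-B 1 0) ^ 2 = 1 := by simpa [h20, sq] using gram 0 0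
  have horth : B 0 0 * B 0 1 + B 1 0 * B 1 1 = 0 := by simpa [h20, h21] using gram 0 1
  have hdet' : B 0 0 * B 1 1 - B 0 1 * B 1 0 = 1 := by
    simpa [det_fin_three, h02, h12, h20, h21, h22] using hdet
  have h01 : B 0 1 = -B 1 0 := by
    linear_combination B 0 0 * horth - B 1 0 * hdet' - B 0 1 * hunit
  have h11 : B 1 1 = B 0 0 := by
    linear_combination B 1 0 * horth + B 0 0 * hdet' - B 1 1 * hunit
  obtain ⟨θ, hcos, hsin⟩ := exists_cos_eq_sin_eq_of_sq_add_sq_eq_one hunit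
  refine ⟨θ, ?_⟩
  ext j k
  fin_cases j <;> fin_cases k <;> simp [zRotation, hcos, hsin, h01, h11, h02, h12, h20, h21, h22]

/-- every element of `SO(3)` is conjugate within `SO(3)` to a rotation about the
`z`-axis. -/
theorem SO3_conjugate_to_maximal_torus (A : Matrix (Fin 3) (Fin 3) ℝ)
    (hA : Aᵀ * A = 1) (hdet : A.det = 1) :
    ∃ (P : Matrix (Fin 3) (Fin 3) ℝ) (θ : ℝ),
      Pᵀ * P = 1 ∧ P.det = 1 ∧
      A = P * !![Real.cos θ, Real.sin θ, 0; -Real.sin θ, Real.cos θ, 0; 0, 0, 1] * Pᵀ := by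
  have hSO : A ∈ specialOrthogonalGroup (Fin 3) ℝ :=
    ⟨(mem_orthogonalGroup_iff' _ _).2 hA, hdet⟩
  obtain ⟨u, hu, hAu⟩ :=
    exists_norm_eq_one_mulVec_eq_self_of_mem_specialOrthogonalGroup (by decide) hSO
  obtain ⟨P, hP, hPu⟩ := exists_mem_specialOrthogonalGroup_mulVec_single_eq hu 2
  have hPP : Pᵀ * P = 1 := (mem_orthogonalGroup_iff' _ _).1 hP.1
  have hPT : Pᵀ ∈ specialOrthogonalGroup (Fin 3) ℝ :=
    ⟨transpose_mem_unitaryGroup_iff.2 hP.1, (det_transpose P).trans hP.2⟩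
  have hfix : (Pᵀ * A * P) *ᵥ Pi.single 2 1 = Pi.single 2 1 := by
    rw [← mulVec_mulVec, ← mulVec_mulVec, hPu, hAu, ← hPu, mulVec_mulVec, hPP, one_mulVec]
  obtain ⟨θ, hθ⟩ :=
    exists_eq_zRotation_of_mulVec_single_two (mul_mem (mul_mem hPT hSO) hP) hfix
  refine ⟨P, θ, hPP, hP.2, ?_⟩
  calc A = P * Pᵀ * A * (P * Pᵀ) := by rw [mul_eq_one_comm.1 hPP, one_mul, mul_one]
    _ = P * zRotation θ * Pᵀ := by rw [← hθ]; simp only [mul_assoc]
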